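/- The functor G from (S ⊗ S^op)-modules to (B ⊗ B^op)-modules sending Y to [[Y, 0],[M ⊗_S Y, 0]] is naturally isomorphic to B(1−ε) ⊗_S (−) ⊗_S (1−ε)B; it is fully faithful and sends projective objects to projective objects. -/

import Mathlib

set_option linter.unusedSectionVars false
set_option maxHeartbeats 1000000
set_option synthInstance.maxHeartbeats 400000

open MulOpposite
open scoped TensorProduct

universe u

noncomputable section

open scoped TensorProduct
open MulOpposite

namespace NC

noncomputable section

universe w v

variable (k : Type w) [CommRing k] (B : Type u) [Ring B]
variable (M N : Type v) [AddCommGroup M] [AddCommGroup N] [Module k M] [Module k N]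
variable [Module Bᵐᵒᵖ M] [Module B N]

/-- The defining relations of the balanced tensor product `M ⊗_B N`. -/
def rel : Submodule k (TensorProduct k M N) :=
  Submodule.span k
    {z | ∃ (b : B) (m : M) (n : N), z = (op b • m) ⊗ₜ[k] n - m ⊗ₜ[k] (b • n)}

/-- The balanced tensor product `M ⊗_B N` of a right `B`-module `M` and a left
`B`-module `N` over the noncommutative ring `B`, as a quotient of `M ⊗[k] N`. -/
def Tensor := TensorProduct k M N ⧸ rel k B M N

instance : AddCommGroup (Tensor k B M N) :=
  inferInstanceAs (AddCommGroup (TensorProduct k M N ⧸ rel k B M N))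

instance : Module k (Tensor k B M N) :=
  inferInstanceAs (Module k (TensorProduct k M N ⧸ rel k B M N))

variable {M N}

/-- The canonical image of `m ⊗ n` in `M ⊗_B N`. -/
def mk (m : M) (n : N) : Tensor k B M N :=
  Submodule.Quotient.mk (m ⊗ₜ[k] n)

lemma mk_balanced (b : B) (m : M) (n : N) : mk k B (op b • m) n = mk k B m (b • n) := by
  exact (Submodule.Quotient.eq (rel k B M N)).mpr (Submodule.subset_span ⟨b, m, n, rfl⟩)

lemma mk_add_left (m m' : M) (n : N) : mk k B (m + m') n = mk k B m n + mk k B m' n := by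
  exact (congrArg (Submodule.Quotient.mk (p := rel k B M N)) (TensorProduct.add_tmul m m' n)).trans
    (Submodule.Quotient.mk_add _)

lemma mk_add_right (m : M) (n n' : N) : mk k B m (n + n') = mk k B m n + mk k B m n' := by
  exact (congrArg (Submodule.Quotient.mk (p := rel k B M N)) (TensorProduct.tmul_add m n n')).trans
    (Submodule.Quotient.mk_add _)

lemma smul_mk_k (c : k) (m : M) (n : N) : c • mk k B m n = mk k B (c • m) n := by
  exact (Submodule.Quotient.mk_smul (rel k B M N) c (m ⊗ₜ[k] n)).symm.trans
    (congrArg (Submodule.Quotient.mk (p := rel k B M N)) (TensorProduct.smul_tmul' c m n))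

lemma smul_mk_k' (c : k) (m : M) (n : N) : c • mk k B m n = mk k B m (c • n) := by
  exact (Submodule.Quotient.mk_smul (rel k B M N) c (m ⊗ₜ[k] n)).symm.trans
    (congrArg (Submodule.Quotient.mk (p := rel k B M N)) (TensorProduct.tmul_smul c m n).symm)

lemma mk_zero_left (n : N) : mk k B (0 : M) n = 0 := by
  exact (congrArg (Submodule.Quotient.mk (p := rel k B M N)) (TensorProduct.zero_tmul M n)).trans
    (Submodule.Quotient.mk_zero _)

lemma mk_zero_right (m : M) : mk k B m (0 : N) = 0 := by
  exact (congrArg (Submodule.Quotient.mk (p := rel k B M N)) (TensorProduct.tmul_zero N m)).trans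
    (Submodule.Quotient.mk_zero _)

lemma induction_on {p : Tensor k B M N → Prop} (t : Tensor k B M N)
    (zero : p 0) (basic : ∀ m n, p (mk k B m n))
    (add : ∀ x y, p x → p y → p (x + y)) : p t := by
  obtain ⟨x, rfl⟩ := Submodule.Quotient.mk_surjective _ t
  induction x using TensorProduct.induction_on with
  | zero => exact zero
  | tmul m n => exact basic m n
  | add x y hx hy => rw [Submodule.Quotient.mk_add]; exact add _ _ hx hy

section Lift

variable {P : Type v} [AddCommGroup P] [Module k P]

/-- Lift a balanced `k`-bilinear map to the balanced tensor product. -/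
def lift (f : M →ₗ[k] N →ₗ[k] P)
    (hf : ∀ (b : B) (m : M) (n : N), f (op b • m) n = f m (b • n)) :
    Tensor k B M N →ₗ[k] P :=
  Submodule.liftQ _ (TensorProduct.lift f) (by
    rw [rel, Submodule.span_le]
    rintro z ⟨b, m, n, rfl⟩
    simp [LinearMap.mem_ker, hf b m n])

@[simp] lemma lift_mk (f : M →ₗ[k] N →ₗ[k] P) (hf) (m : M) (n : N) :
    lift k B f hf (mk k B m n) = f m n := rfl

end Lift

section LeftAction

variable (A : Type u) [Ring A] [Module A M]
variable [SMulCommClass A Bᵐᵒᵖ M] [SMulCommClass A k M]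

/-- The `k`-linear endomorphism of `M` given by the action of `a : A`. -/
def actL (a : A) : M →ₗ[k] M where
  toFun m := a • m
  map_add' := smul_add a
  map_smul' c m := (smul_comm a c m)

variable (N)

lemma relLe (a : A) :
    rel k B M N ≤ Submodule.comap (LinearMap.rTensor N (actL k A a)) (rel k B M N) := by
  rw [rel, Submodule.span_le]
  rintro z ⟨b, m, n, rfl⟩
  simp only [SetLike.mem_coe, Submodule.mem_comap, map_sub, LinearMap.rTensor_tmul]
  refine Submodule.subset_span ⟨b, a • m, n, ?_⟩
  have h1 : actL k A a (op b • m) = op b • (a • m) := smul_comm a (op b) m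
  have h2 : actL k A a m = a • m := rfl
  rw [h1, h2]

/-- The action of `a : A` on `M ⊗_B N`. -/
def actLQ (a : A) : Tensor k B M N →ₗ[k] Tensor k B M N :=
  Submodule.mapQ _ _ (LinearMap.rTensor N (actL k A a)) (relLe k B N A a)

lemma actLQ_mk (a : A) (m : M) (n : N) :
    actLQ k B N A a (mk k B m n) = mk k B (a • m) n := rfl

/-- The ring homomorphism `A → End_k (M ⊗_B N)` defining the left `A`-module structure. -/
def actLRingHom : A →+* Module.End k (Tensor k B M N) where
  toFun := actLQ k B N A
  map_one' := by
    refine Submodule.linearMap_qext _ (TensorProduct.ext' fun m n => ?_)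
    show actLQ k B N A 1 (mk k B m n) = mk k B m n
    rw [actLQ_mk, one_smul]
  map_mul' x y := by
    refine Submodule.linearMap_qext _ (TensorProduct.ext' fun m n => ?_)
    show actLQ k B N A (x * y) (mk k B m n) = actLQ k B N A x (actLQ k B N A y (mk k B m n))
    rw [actLQ_mk, actLQ_mk, actLQ_mk, mul_smul]
  map_zero' := by
    refine Submodule.linearMap_qext _ (TensorProduct.ext' fun m n => ?_)
    show actLQ k B N A 0 (mk k B m n) = 0
    rw [actLQ_mk, zero_smul, mk_zero_left]
  map_add' x y := by
    refine Submodule.linearMap_qext _ (TensorProduct.ext' fun m n => ?_)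
    show actLQ k B N A (x + y) (mk k B m n)
        = actLQ k B N A x (mk k B m n) + actLQ k B N A y (mk k B m n)
    rw [actLQ_mk, actLQ_mk, actLQ_mk, add_smul, mk_add_left]

variable (M)

/-- The left `A`-module structure on `M ⊗_B N` induced by the left `A`-action on `M`. -/
def leftModule : Module A (Tensor k B M N) :=
  Module.compHom (Tensor k B M N) (actLRingHom k B N A (M := M))

attribute [local instance] leftModule

lemma smul_mk_left (a : A) (m : M) (n : N) :
    a • mk k B m n = mk k B (a • m) n := rfl

instance : SMulCommClass A k (Tensor k B M N) where
  smul_comm a c t := by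
    induction t using induction_on with
    | zero => simp
    | basic m n => rw [smul_mk_k, smul_mk_left, smul_mk_left, smul_mk_k, smul_comm]
    | add x y hx hy => simp [smul_add, hx, hy]

instance : SMulCommClass k A (Tensor k B M N) := SMulCommClass.symm _ _ _

end LeftAction

section RightAction

variable (C : Type u) [Ring C] [Module Cᵐᵒᵖ N]
variable [SMulCommClass Cᵐᵒᵖ B N] [SMulCommClass Cᵐᵒᵖ k N]

/-- The `k`-linear endomorphism of `N` given by the right action of `c : C`. -/
def actR (c : Cᵐᵒᵖ) : N →ₗ[k] N where
  toFun n := c • n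
  map_add' := smul_add c
  map_smul' d n := (smul_comm c d n)

variable (M)

lemma relLeR (c : Cᵐᵒᵖ) :
    rel k B M N ≤ Submodule.comap (LinearMap.lTensor M (actR k C c)) (rel k B M N) := by
  rw [rel, Submodule.span_le]
  rintro z ⟨b, m, n, rfl⟩
  simp only [SetLike.mem_coe, Submodule.mem_comap, map_sub, LinearMap.lTensor_tmul]
  refine Submodule.subset_span ⟨b, m, c • n, ?_⟩
  have h1 : actR k C c (b • n) = b • (c • n) := smul_comm c b n
  have h2 : actR k C c n = c • n := rfl
  rw [h1, h2]

/-- The right action of `c : C` on `M ⊗_B N`. -/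
def actRQ (c : Cᵐᵒᵖ) : Tensor k B M N →ₗ[k] Tensor k B M N :=
  Submodule.mapQ _ _ (LinearMap.lTensor M (actR k C c)) (relLeR k B M C c)

lemma actRQ_mk (c : Cᵐᵒᵖ) (m : M) (n : N) :
    actRQ k B M C c (mk k B m n) = mk k B m (c • n) := rfl

/-- The ring homomorphism `Cᵐᵒᵖ → End_k (M ⊗_B N)` defining the right `C`-module structure. -/
def actRRingHom : Cᵐᵒᵖ →+* Module.End k (Tensor k B M N) where
  toFun := actRQ k B M C
  map_one' := by
    refine Submodule.linearMap_qext _ (TensorProduct.ext' fun m n => ?_)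
    show actRQ k B M C 1 (mk k B m n) = mk k B m n
    rw [actRQ_mk, one_smul]
  map_mul' x y := by
    refine Submodule.linearMap_qext _ (TensorProduct.ext' fun m n => ?_)
    show actRQ k B M C (x * y) (mk k B m n) = actRQ k B M C x (actRQ k B M C y (mk k B m n))
    rw [actRQ_mk, actRQ_mk, actRQ_mk, mul_smul]
  map_zero' := by
    refine Submodule.linearMap_qext _ (TensorProduct.ext' fun m n => ?_)
    show actRQ k B M C 0 (mk k B m n) = 0
    rw [actRQ_mk, zero_smul, mk_zero_right]
  map_add' x y := by
    refine Submodule.linearMap_qext _ (TensorProduct.ext' fun m n => ?_)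
    show actRQ k B M C (x + y) (mk k B m n)
        = actRQ k B M C x (mk k B m n) + actRQ k B M C y (mk k B m n)
    rw [actRQ_mk, actRQ_mk, actRQ_mk, add_smul, mk_add_right]

/-- The right `C`-module structure on `M ⊗_B N` induced by the right `C`-action on `N`. -/
def rightModule : Module Cᵐᵒᵖ (Tensor k B M N) :=
  Module.compHom (Tensor k B M N) (actRRingHom k B M C (N := N))

attribute [local instance] rightModule

lemma smul_mk_right (c : Cᵐᵒᵖ) (m : M) (n : N) :
    c • mk k B m n = mk k B m (c • n) := rfl

instance : SMulCommClass Cᵐᵒᵖ k (Tensor k B M N) where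
  smul_comm c d t := by
    induction t using induction_on with
    | zero => simp
    | basic m n =>
        rw [smul_mk_k, smul_mk_right, smul_mk_right, smul_mk_k]
    | add x y hx hy => simp [smul_add, hx, hy]

instance : SMulCommClass k Cᵐᵒᵖ (Tensor k B M N) := SMulCommClass.symm _ _ _

end RightAction

section Bimodule

variable (A C : Type u) [Ring A] [Ring C] [Module A M] [Module Cᵐᵒᵖ N]
variable [SMulCommClass A Bᵐᵒᵖ M] [SMulCommClass A k M]
variable [SMulCommClass Cᵐᵒᵖ B N] [SMulCommClass Cᵐᵒᵖ k N]

attribute [local instance] leftModule rightModule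

instance : SMulCommClass A Cᵐᵒᵖ (Tensor k B M N) where
  smul_comm a c t := by
    induction t using induction_on with
    | zero => simp
    | basic m n =>
        simp only [smul_mk_right k B M C, smul_mk_left k B M N A]
    | add x y hx hy => simp [smul_add, hx, hy]

section Tower

variable [Algebra k A] [Module k M] [IsScalarTower k A M]

instance : IsScalarTower k A (Tensor k B M N) where
  smul_assoc c a t := by
    induction t using induction_on with
    | zero => simp
    | basic m n =>
        simp only [smul_mk_left k B M N A, smul_mk_k, smul_assoc]
    | add x y hx hy => simp [smul_add, hx, hy]

end Tower

section TowerR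

variable [Algebra k C] [IsScalarTower k Cᵐᵒᵖ N]

instance : IsScalarTower k Cᵐᵒᵖ (Tensor k B M N) where
  smul_assoc c a t := by
    induction t using induction_on with
    | zero => simp
    | basic m n =>
        simp only [smul_mk_right k B M C, smul_mk_k', smul_assoc]
    | add x y hx hy => simp [smul_add, hx, hy]

end TowerR

end Bimodule

end

end NC


open MulOpposite


/-- The lower triangular matrix algebra `[[S, 0], [M, A]]` associated to rings `S`, `A`
and an `(A, S)`-bimodule `M`. -/
@[ext] structure Tri (S M A : Type u) where
  s : S
  m : M
  a : A

namespace Tri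

variable {S M A : Type u} [Ring S] [Ring A] [AddCommGroup M]
variable [Module A M] [Module Sᵐᵒᵖ M] [SMulCommClass A Sᵐᵒᵖ M]

instance : Zero (Tri S M A) := ⟨⟨0, 0, 0⟩⟩
instance : Add (Tri S M A) := ⟨fun x y => ⟨x.s + y.s, x.m + y.m, x.a + y.a⟩⟩
instance : Neg (Tri S M A) := ⟨fun x => ⟨-x.s, -x.m, -x.a⟩⟩
instance : One (Tri S M A) := ⟨⟨1, 0, 1⟩⟩
instance : Mul (Tri S M A) :=
  ⟨fun x y => ⟨x.s * y.s, op y.s • x.m + x.a • y.m, x.a * y.a⟩⟩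

@[simp] lemma zero_s : (0 : Tri S M A).s = 0 := rfl
@[simp] lemma zero_m : (0 : Tri S M A).m = 0 := rfl
@[simp] lemma zero_a : (0 : Tri S M A).a = 0 := rfl
@[simp] lemma add_s (x y : Tri S M A) : (x + y).s = x.s + y.s := rfl
@[simp] lemma add_m (x y : Tri S M A) : (x + y).m = x.m + y.m := rfl
@[simp] lemma add_a (x y : Tri S M A) : (x + y).a = x.a + y.a := rfl
@[simp] lemma neg_s (x : Tri S M A) : (-x).s = -x.s := rfl
@[simp] lemma neg_m (x : Tri S M A) : (-x).m = -x.m := rfl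
@[simp] lemma neg_a (x : Tri S M A) : (-x).a = -x.a := rfl
@[simp] lemma one_s : (1 : Tri S M A).s = 1 := rfl
@[simp] lemma one_m : (1 : Tri S M A).m = 0 := rfl
@[simp] lemma one_a : (1 : Tri S M A).a = 1 := rfl
@[simp] lemma mul_s (x y : Tri S M A) : (x * y).s = x.s * y.s := rfl
@[simp] lemma mul_m (x y : Tri S M A) : (x * y).m = op y.s • x.m + x.a • y.m := rfl
@[simp] lemma mul_a (x y : Tri S M A) : (x * y).a = x.a * y.a := rfl

instance : AddCommGroup (Tri S M A) where
  add_assoc x y z := by ext <;> simp [add_assoc]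
  zero_add x := by ext <;> simp
  add_zero x := by ext <;> simp
  neg_add_cancel x := by ext <;> simp
  add_comm x y := by ext <;> simp [add_comm]
  nsmul := nsmulRec
  zsmul := zsmulRec

instance : Ring (Tri S M A) where
  __ := (inferInstance : AddCommGroup (Tri S M A))
  mul_assoc x y z := by
    ext <;> simp [mul_assoc, mul_smul, smul_add, smul_comm, add_assoc]
  one_mul x := by ext <;> simp
  mul_one x := by ext <;> simp
  left_distrib x y z := by ext <;> (simp [mul_add, smul_add, add_smul]; try abel)
  right_distrib x y z := by ext <;> (simp [add_mul, smul_add, add_smul]; try abel)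
  zero_mul x := by ext <;> simp
  mul_zero x := by ext <;> simp

@[simp] lemma sub_s (x y : Tri S M A) : (x - y).s = x.s - y.s := by
  change (x + -y).s = _; rw [add_s, neg_s, sub_eq_add_neg]

@[simp] lemma sub_m (x y : Tri S M A) : (x - y).m = x.m - y.m := by
  change (x + -y).m = _; rw [add_m, neg_m, sub_eq_add_neg]

@[simp] lemma sub_a (x y : Tri S M A) : (x - y).a = x.a - y.a := by
  change (x + -y).a = _; rw [add_a, neg_a, sub_eq_add_neg]

/-- The idempotent `ε = [[0,0],[0,1]]`. -/
def eps : Tri S M A := ⟨0, 0, 1⟩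

@[simp] lemma eps_s : (eps : Tri S M A).s = 0 := rfl
@[simp] lemma eps_m : (eps : Tri S M A).m = 0 := rfl
@[simp] lemma eps_a : (eps : Tri S M A).a = 1 := rfl

lemma eps_idem : (eps : Tri S M A) * eps = eps := by ext <;> simp

/-- The (non-unital) embedding of `A` in the lower right corner. -/
def iota (a : A) : Tri S M A := ⟨0, 0, a⟩

@[simp] lemma iota_s (a : A) : (iota a : Tri S M A).s = 0 := rfl
@[simp] lemma iota_m (a : A) : (iota a : Tri S M A).m = 0 := rfl
@[simp] lemma iota_a (a : A) : (iota a : Tri S M A).a = a := rfl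

section Alg

variable (k : Type u) [CommRing k] [Algebra k S] [Algebra k A] [Module k M]
variable [IsScalarTower k A M] [IsScalarTower k Sᵐᵒᵖ M]

/-- The canonical ring homomorphism `k → Tri S M A`. -/
def algMap : k →+* Tri S M A where
  toFun c := ⟨algebraMap k S c, 0, algebraMap k A c⟩
  map_one' := by ext <;> simp
  map_mul' x y := by ext <;> simp
  map_zero' := by ext <;> simp
  map_add' x y := by ext <;> simp

instance : Algebra k (Tri S M A) :=
  RingHom.toAlgebra' (algMap k) (by
    intro c x
    ext
    · simp [algMap, Algebra.commutes]
    · show op x.s • (0 : M) + algebraMap k A c • x.m = op (algebraMap k S c) • x.m + x.a • 0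
      rw [smul_zero, smul_zero, zero_add, add_zero, ← MulOpposite.algebraMap_apply,
        algebraMap_smul, algebraMap_smul]
    · simp [algMap, Algebra.commutes])

end Alg

end Tri

section Corner

variable (S A M : Type u) [Ring S] [Ring A] [AddCommGroup M]
variable [Module A M] [Module Sᵐᵒᵖ M] [SMulCommClass A Sᵐᵒᵖ M]

@[simp] lemma iota_mul (a b : A) :
    (Tri.iota (a * b) : Tri S M A) = Tri.iota a * Tri.iota b := by ext <;> simp

@[simp] lemma iota_add (a b : A) :
    (Tri.iota (a + b) : Tri S M A) = Tri.iota a + Tri.iota b := by ext <;> simp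

@[simp] lemma iota_zero : (Tri.iota (0 : A) : Tri S M A) = 0 := by ext <;> simp

lemma iota_one : (Tri.iota (1 : A) : Tri S M A) = Tri.eps := by ext <;> simp

@[simp] lemma eps_mul_iota (a : A) :
    (Tri.eps : Tri S M A) * Tri.iota a = Tri.iota a := by ext <;> simp

@[simp] lemma iota_mul_eps (a : A) :
    (Tri.iota a : Tri S M A) * Tri.eps = Tri.iota a := by ext <;> simp

/-- The right ideal `εB` of `B = Tri S M A`, as a right `B`-module. -/
def epsRight : Submodule (Tri S M A)ᵐᵒᵖ (Tri S M A) where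
  carrier := {x | Tri.eps * x = x}
  add_mem' := fun {a} {b} ha hb => by
    simp only [Set.mem_setOf_eq] at *
    rw [mul_add, ha, hb]
  zero_mem' := by simp
  smul_mem' := fun c {x} hx => by
    simp only [Set.mem_setOf_eq] at *
    rw [MulOpposite.smul_eq_mul_unop, ← mul_assoc, hx]

/-- The right ideal `(1-ε)B` of `B = Tri S M A`, as a right `B`-module. -/
def oneEpsRight : Submodule (Tri S M A)ᵐᵒᵖ (Tri S M A) where
  carrier := {x | (1 - Tri.eps) * x = x}
  add_mem' := fun {a} {b} ha hb => by
    simp only [Set.mem_setOf_eq] at *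
    rw [mul_add, ha, hb]
  zero_mem' := by simp
  smul_mem' := fun c {x} hx => by
    simp only [Set.mem_setOf_eq] at *
    rw [MulOpposite.smul_eq_mul_unop, ← mul_assoc, hx]

/-- The left ideal `Bε` of `B = Tri S M A`, as a left `B`-module. -/
def epsLeft : Submodule (Tri S M A) (Tri S M A) where
  carrier := {x | x * Tri.eps = x}
  add_mem' := fun {a} {b} ha hb => by
    simp only [Set.mem_setOf_eq] at *
    rw [add_mul, ha, hb]
  zero_mem' := by simp
  smul_mem' := fun c {x} hx => by
    simp only [Set.mem_setOf_eq, smul_eq_mul] at *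
    rw [mul_assoc, hx]

/-- The left `A`-action on `εB` via `a • x = ι(a) x`. -/
instance : Module A (epsRight S A M) where
  smul a x := ⟨Tri.iota a * x.val, by
    have hx := x.2
    simp only [epsRight, Submodule.mem_mk, AddSubmonoid.mem_mk, AddSubsemigroup.mem_mk,
      Set.mem_setOf_eq] at *
    rw [← mul_assoc, eps_mul_iota]⟩
  one_smul x := Subtype.ext (by
    show Tri.iota 1 * x.val = x.val
    rw [iota_one]; exact x.2)
  mul_smul a b x := Subtype.ext (by
    show Tri.iota (a * b) * x.val = Tri.iota a * (Tri.iota b * x.val)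
    rw [iota_mul, mul_assoc])
  smul_zero a := Subtype.ext (mul_zero _)
  smul_add a x y := Subtype.ext (mul_add _ _ _)
  add_smul a b x := Subtype.ext (by
    show Tri.iota (a + b) * x.val = Tri.iota a * x.val + Tri.iota b * x.val
    rw [iota_add, add_mul])
  zero_smul x := Subtype.ext (by
    show Tri.iota 0 * x.val = 0
    rw [iota_zero, zero_mul])

lemma epsRight_smul_def (a : A) (x : epsRight S A M) :
    (a • x : epsRight S A M).val = Tri.iota a * x.val := rfl

/-- The right `A`-action on `Bε` via `x • a = x ι(a)`. -/
instance : Module Aᵐᵒᵖ (epsLeft S A M) where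
  smul a x := ⟨x.val * Tri.iota a.unop, by
    have hx := x.2
    simp only [epsLeft, Submodule.mem_mk, AddSubmonoid.mem_mk, AddSubsemigroup.mem_mk,
      Set.mem_setOf_eq] at *
    rw [mul_assoc, iota_mul_eps]⟩
  one_smul x := Subtype.ext (by
    show x.val * Tri.iota (1 : A) = x.val
    rw [iota_one]; exact x.2)
  mul_smul a b x := Subtype.ext (by
    show x.val * Tri.iota (b.unop * a.unop) = (x.val * Tri.iota b.unop) * Tri.iota a.unop
    rw [iota_mul, mul_assoc])
  smul_zero a := Subtype.ext (zero_mul _)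
  smul_add a x y := Subtype.ext (add_mul _ _ _)
  add_smul a b x := Subtype.ext (by
    show x.val * Tri.iota (a.unop + b.unop) = x.val * Tri.iota a.unop + x.val * Tri.iota b.unop
    rw [iota_add, mul_add])
  zero_smul x := Subtype.ext (by
    show x.val * Tri.iota 0 = 0
    rw [iota_zero, mul_zero])

lemma epsLeft_smul_def (a : Aᵐᵒᵖ) (x : epsLeft S A M) :
    (a • x : epsLeft S A M).val = x.val * Tri.iota a.unop := rfl

instance : SMulCommClass A (Tri S M A)ᵐᵒᵖ (epsRight S A M) :=
  ⟨fun a c x => Subtype.ext (by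
    show Tri.iota a * (x.val * c.unop) = (Tri.iota a * x.val) * c.unop
    rw [mul_assoc])⟩

instance : SMulCommClass (Tri S M A)ᵐᵒᵖ A (epsRight S A M) := SMulCommClass.symm _ _ _

instance : SMulCommClass Aᵐᵒᵖ (Tri S M A) (epsLeft S A M) :=
  ⟨fun a c x => Subtype.ext (by
    show (c * x.val) * Tri.iota a.unop = c * (x.val * Tri.iota a.unop)
    rw [mul_assoc])⟩

instance : SMulCommClass (Tri S M A) Aᵐᵒᵖ (epsLeft S A M) := SMulCommClass.symm _ _ _

end Corner

section Corner7

variable (k : Type u) [Field k]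
variable (S : Type u) [Ring S] [Algebra k S] (A : Type u) [Ring A] [Algebra k A]
variable (M : Type u) [AddCommGroup M] [Module k M] [Module A M] [Module Sᵐᵒᵖ M]
variable [SMulCommClass A Sᵐᵒᵖ M] [IsScalarTower k A M] [IsScalarTower k Sᵐᵒᵖ M]

@[simp] lemma Tri.smul_s (c : k) (x : Tri S M A) : (c • x).s = c • x.s := by
  show (Tri.algMap k c * x).s = c • x.s
  show algebraMap k S c * x.s = c • x.s
  rw [← Algebra.smul_def]

@[simp] lemma Tri.smul_m (c : k) (x : Tri S M A) : (c • x).m = c • x.m := by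
  show (Tri.algMap k c * x).m = c • x.m
  show op x.s • (0 : M) + algebraMap k A c • x.m = c • x.m
  rw [smul_zero, zero_add, algebraMap_smul]

@[simp] lemma Tri.smul_a (c : k) (x : Tri S M A) : (c • x).a = c • x.a := by
  show (Tri.algMap k c * x).a = c • x.a
  show algebraMap k A c * x.a = c • x.a
  rw [← Algebra.smul_def]

/-- The embedding of `S` in the upper left corner. -/
def iotaS (s : S) : Tri S M A := ⟨s, 0, 0⟩

@[simp] lemma iotaS_s (s : S) : (iotaS S A M s).s = s := rfl
@[simp] lemma iotaS_m (s : S) : (iotaS S A M s).m = 0 := rfl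
@[simp] lemma iotaS_a (s : S) : (iotaS S A M s).a = 0 := rfl

@[simp] lemma iotaS_mul (s t : S) :
    iotaS S A M (s * t) = iotaS S A M s * iotaS S A M t := by ext <;> simp

@[simp] lemma iotaS_add (s t : S) :
    iotaS S A M (s + t) = iotaS S A M s + iotaS S A M t := by ext <;> simp

@[simp] lemma iotaS_zero : iotaS S A M (0 : S) = 0 := by ext <;> simp

lemma iotaS_one : iotaS S A M (1 : S) = 1 - Tri.eps := by ext <;> simp

lemma iotaS_smul (c : k) (s : S) : iotaS S A M (c • s) = c • iotaS S A M s := by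
  ext <;> simp

lemma oneEps_mul_iotaS (s : S) :
    (1 - Tri.eps : Tri S M A) * iotaS S A M s = iotaS S A M s := by ext <;> simp

lemma iotaS_mul_oneEps (s : S) :
    iotaS S A M s * (1 - Tri.eps : Tri S M A) = iotaS S A M s := by ext <;> simp

/-- The left `S`-action on `(1-ε)B` via `s • x = ι_S(s) x`. -/
instance : Module S (oneEpsRight S A M) where
  smul s x := ⟨iotaS S A M s * x.val, by
    have hx := x.2
    simp only [oneEpsRight, Submodule.mem_mk, AddSubmonoid.mem_mk, AddSubsemigroup.mem_mk,
      Set.mem_setOf_eq] at *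
    rw [← mul_assoc, oneEps_mul_iotaS]⟩
  one_smul x := Subtype.ext (by
    show iotaS S A M 1 * x.val = x.val
    rw [iotaS_one]; exact x.2)
  mul_smul s t x := Subtype.ext (by
    show iotaS S A M (s * t) * x.val = iotaS S A M s * (iotaS S A M t * x.val)
    rw [iotaS_mul, mul_assoc])
  smul_zero s := Subtype.ext (mul_zero _)
  smul_add s x y := Subtype.ext (mul_add _ _ _)
  add_smul s t x := Subtype.ext (by
    show iotaS S A M (s + t) * x.val = iotaS S A M s * x.val + iotaS S A M t * x.val
    rw [iotaS_add, add_mul])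
  zero_smul x := Subtype.ext (by
    show iotaS S A M 0 * x.val = 0
    rw [iotaS_zero, zero_mul])

lemma oneEpsRight_smul_def (s : S) (x : oneEpsRight S A M) :
    (s • x : oneEpsRight S A M).val = iotaS S A M s * x.val := rfl

instance : SMulCommClass S (Tri S M A)ᵐᵒᵖ (oneEpsRight S A M) :=
  ⟨fun s c x => Subtype.ext (by
    show iotaS S A M s * (x.val * c.unop) = (iotaS S A M s * x.val) * c.unop
    rw [mul_assoc])⟩

instance : SMulCommClass (Tri S M A)ᵐᵒᵖ S (oneEpsRight S A M) := SMulCommClass.symm _ _ _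

instance : IsScalarTower k S (oneEpsRight S A M) :=
  ⟨fun c s x => Subtype.ext (by
    show iotaS S A M (c • s) * x.val = c • (iotaS S A M s * x.val)
    rw [iotaS_smul, smul_mul_assoc])⟩

/-- The left ideal `B(1-ε)` of `B = Tri S M A`, as a left `B`-module. -/
def oneEpsLeft : Submodule (Tri S M A) (Tri S M A) where
  carrier := {x | x * (1 - Tri.eps) = x}
  add_mem' := fun {a} {b} ha hb => by
    simp only [Set.mem_setOf_eq] at *
    rw [add_mul, ha, hb]
  zero_mem' := by simp
  smul_mem' := fun c {x} hx => by
    simp only [Set.mem_setOf_eq, smul_eq_mul] at *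
    rw [mul_assoc, hx]

/-- The right `S`-action on `B(1-ε)` via `x • s = x ι_S(s)`. -/
instance : Module Sᵐᵒᵖ (oneEpsLeft S A M) where
  smul s x := ⟨x.val * iotaS S A M s.unop, by
    have hx := x.2
    simp only [oneEpsLeft, Submodule.mem_mk, AddSubmonoid.mem_mk, AddSubsemigroup.mem_mk,
      Set.mem_setOf_eq] at *
    rw [mul_assoc, iotaS_mul_oneEps]⟩
  one_smul x := Subtype.ext (by
    show x.val * iotaS S A M 1 = x.val
    rw [iotaS_one]; exact x.2)
  mul_smul s t x := Subtype.ext (by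
    show x.val * iotaS S A M (t.unop * s.unop) = (x.val * iotaS S A M t.unop) * iotaS S A M s.unop
    rw [iotaS_mul, mul_assoc])
  smul_zero s := Subtype.ext (zero_mul _)
  smul_add s x y := Subtype.ext (add_mul _ _ _)
  add_smul s t x := Subtype.ext (by
    show x.val * iotaS S A M (s.unop + t.unop) = x.val * iotaS S A M s.unop + x.val * iotaS S A M t.unop
    rw [iotaS_add, mul_add])
  zero_smul x := Subtype.ext (by
    show x.val * iotaS S A M 0 = 0
    rw [iotaS_zero, mul_zero])

instance : SMulCommClass Sᵐᵒᵖ (Tri S M A) (oneEpsLeft S A M) :=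
  ⟨fun s c x => Subtype.ext (by
    show (c * x.val) * iotaS S A M s.unop = c * (x.val * iotaS S A M s.unop)
    rw [mul_assoc])⟩

instance : SMulCommClass (Tri S M A) Sᵐᵒᵖ (oneEpsLeft S A M) := SMulCommClass.symm _ _ _

instance : IsScalarTower k Sᵐᵒᵖ (oneEpsLeft S A M) :=
  ⟨fun c s x => Subtype.ext (by
    show x.val * iotaS S A M (c • s).unop = c • (x.val * iotaS S A M s.unop)
    rw [MulOpposite.unop_smul, iotaS_smul, mul_smul_comm])⟩

instance : IsScalarTower k Aᵐᵒᵖ (epsLeft S A M) :=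
  ⟨fun c a x => Subtype.ext (by
    show x.val * Tri.iota (c • a).unop = c • (x.val * Tri.iota a.unop)
    have : (Tri.iota ((c • a).unop) : Tri S M A) = c • Tri.iota a.unop := by
      ext <;> simp [MulOpposite.unop_smul]
    rw [this, mul_smul_comm])⟩

instance : IsScalarTower k A (epsRight S A M) :=
  ⟨fun c a x => Subtype.ext (by
    show Tri.iota (c • a) * x.val = c • (Tri.iota a * x.val)
    have : (Tri.iota (c • a) : Tri S M A) = c • Tri.iota a := by ext <;> simp
    rw [this, smul_mul_assoc])⟩

/-- The projection `B → A`, as a `k`-algebra homomorphism. -/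
def projA : Tri S M A →ₐ[k] A where
  toFun x := x.a
  map_one' := rfl
  map_mul' x y := rfl
  map_zero' := rfl
  map_add' x y := rfl
  commutes' c := rfl

/-- The projection `B → S`, as a `k`-algebra homomorphism. -/
def projS : Tri S M A →ₐ[k] S where
  toFun x := x.s
  map_one' := rfl
  map_mul' x y := rfl
  map_zero' := rfl
  map_add' x y := rfl
  commutes' c := rfl

/-- The algebra homomorphism `Φ : B ⊗ Bᵒᵖ → A ⊗ Sᵒᵖ` along which the functor `F` is the
restriction of scalars. -/
def Phi : (Tri S M A ⊗[k] (Tri S M A)ᵐᵒᵖ) →ₐ[k] (A ⊗[k] Sᵐᵒᵖ) :=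
  Algebra.TensorProduct.map (projA k S A M) (AlgHom.op (projS k S A M))

end Corner7

attribute [local instance low] NC.leftModule NC.rightModule

section

open CategoryTheory

variable (k : Type u) [Field k]
variable (S : Type u) [Ring S] [Algebra k S] [FiniteDimensional k S]
variable (A : Type u) [Ring A] [Algebra k A] [FiniteDimensional k A]
variable (M : Type u) [AddCommGroup M] [Module k M] [Module A M] [Module Sᵐᵒᵖ M]
variable [SMulCommClass A Sᵐᵒᵖ M] [IsScalarTower k A M] [IsScalarTower k Sᵐᵒᵖ M]
variable [FiniteDimensional k M]

instance : SMulCommClass Sᵐᵒᵖ A M := SMulCommClass.symm _ _ _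

variable (Y : Type u) [AddCommGroup Y] [Module k Y] [Module S Y] [Module Sᵐᵒᵖ Y] [SMulCommClass S Sᵐᵒᵖ Y] [SMulCommClass Sᵐᵒᵖ S Y] [IsScalarTower k S Y] [IsScalarTower k Sᵐᵒᵖ Y]

/-- The underlying module of `G(Y) = [[Y, 0], [M ⊗_S Y, 0]]`. -/
abbrev GObj := Y × NC.Tensor k S M Y

/-- The left `B`-module structure on `G(Y) = [[Y,0],[M ⊗_S Y,0]]` given by matrix
multiplication: `[[s,0],[m,a]] • (y, t) = (s • y, m ⊗ y + a • t)`. -/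
instance gLeft : Module (Tri S M A) (GObj k S M Y) where
  smul b p := (b.s • p.1, NC.mk k S b.m p.1 + b.a • p.2)
  one_smul p := by
    show ((1 : S) • p.1, NC.mk k S (0 : M) p.1 + (1 : A) • p.2) = p
    rw [one_smul, one_smul, NC.mk_zero_left, zero_add]
  mul_smul b c p := by
    show ((b.s * c.s) • p.1,
        NC.mk k S (op c.s • b.m + b.a • c.m) p.1 + (b.a * c.a) • p.2)
      = (b.s • c.s • p.1,
        NC.mk k S b.m (c.s • p.1) + b.a • (NC.mk k S c.m p.1 + c.a • p.2))
    rw [mul_smul, NC.mk_add_left, NC.mk_balanced, smul_add, NC.smul_mk_left, mul_smul]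
    exact Prod.ext rfl (by abel)
  smul_zero b := by
    show (b.s • (0 : Y), NC.mk k S b.m (0 : Y) + b.a • (0 : NC.Tensor k S M Y)) = 0
    rw [smul_zero, smul_zero, NC.mk_zero_right, zero_add]
    rfl
  smul_add b p q := by
    show (b.s • (p.1 + q.1), NC.mk k S b.m (p.1 + q.1) + b.a • (p.2 + q.2))
      = (b.s • p.1 + b.s • q.1,
        (NC.mk k S b.m p.1 + b.a • p.2) + (NC.mk k S b.m q.1 + b.a • q.2))
    rw [smul_add, NC.mk_add_right, smul_add]
    exact Prod.ext rfl (by abel)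
  add_smul b c p := by
    show ((b.s + c.s) • p.1, NC.mk k S (b.m + c.m) p.1 + (b.a + c.a) • p.2)
      = (b.s • p.1 + c.s • p.1,
        (NC.mk k S b.m p.1 + b.a • p.2) + (NC.mk k S c.m p.1 + c.a • p.2))
    rw [add_smul, NC.mk_add_left, add_smul]
    exact Prod.ext rfl (by abel)
  zero_smul p := by
    show ((0 : S) • p.1, NC.mk k S (0 : M) p.1 + (0 : A) • p.2) = 0
    rw [zero_smul, zero_smul, NC.mk_zero_left, zero_add]
    rfl

lemma gLeft_smul_def (b : Tri S M A) (p : GObj k S M Y) :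
    b • p = (b.s • p.1, NC.mk k S b.m p.1 + b.a • p.2) := rfl

/-- The right `B`-module structure on `G(Y)`, via the projection `B → S`. -/
instance gRight : Module (Tri S M A)ᵐᵒᵖ (GObj k S M Y) :=
  Module.compHom _ ((RingHom.op (projS k S A M).toRingHom) :
    (Tri S M A)ᵐᵒᵖ →+* Sᵐᵒᵖ)

lemma gRight_smul_def (b : (Tri S M A)ᵐᵒᵖ) (p : GObj k S M Y) :
    b • p = (op b.unop.s • p.1, op b.unop.s • p.2) := rfl

instance : SMulCommClass (Tri S M A) (Tri S M A)ᵐᵒᵖ (GObj k S M Y) :=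
  ⟨fun b c p => by
    rw [gRight_smul_def, gLeft_smul_def, gRight_smul_def, gLeft_smul_def]
    refine Prod.ext (smul_comm _ _ _) ?_
    show NC.mk k S b.m (op c.unop.s • p.1) + b.a • (op c.unop.s • p.2)
      = op c.unop.s • (NC.mk k S b.m p.1 + b.a • p.2)
    rw [smul_add, NC.smul_mk_right, smul_comm]⟩

instance : IsScalarTower k (Tri S M A) (GObj k S M Y) :=
  ⟨fun c b p => by
    rw [gLeft_smul_def, gLeft_smul_def]
    have h1 : (c • b).s • p.1 = c • (b.s • p.1) := by rw [Tri.smul_s, smul_assoc]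
    have h2 : NC.mk k S (c • b).m p.1 + (c • b).a • p.2
        = c • (NC.mk k S b.m p.1 + b.a • p.2) := by
      rw [Tri.smul_m, Tri.smul_a, smul_add, ← NC.smul_mk_k, smul_assoc]
    exact Prod.ext h1 h2⟩

instance : IsScalarTower k (Tri S M A)ᵐᵒᵖ (GObj k S M Y) :=
  ⟨fun c b p => by
    rw [gRight_smul_def, gRight_smul_def]
    have hs : (op ((c • b).unop.s) : Sᵐᵒᵖ) = c • op b.unop.s := by
      rw [MulOpposite.unop_smul, Tri.smul_s]
      rfl
    rw [hs]
    exact Prod.ext (smul_assoc _ _ _) (smul_assoc _ _ _)⟩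

/-- The `S ⊗ Sᵒᵖ`-module structure on the `(S,S)`-bimodule `Y`. -/
def envY : Module (S ⊗[k] Sᵐᵒᵖ) Y := TensorProduct.Algebra.module

/-- The `B ⊗ Bᵒᵖ`-module structure on `G(Y)`. -/
def envGY : Module (Tri S M A ⊗[k] (Tri S M A)ᵐᵒᵖ) (GObj k S M Y) :=
  TensorProduct.Algebra.module


end

/-!
Write `e = 1 - ε`. An element `u` of `Be` is `e·u.s + [[0,0],[u.m,0]]` and an element `v` of
`eB` is `v.s·e`, so `Be ⊗_S Y ⊗_S eB` is spanned by the tensors `e ⊗ y ⊗ e` and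
`[[0,0],[m,0]] ⊗ y ⊗ e`. Hence `u ⊗ y ⊗ v ↦ u·(y, 0)·v` is an isomorphism onto
`G(Y) = Y × (M ⊗_S Y)`, with inverse `(y, m ⊗ y') ↦ e ⊗ y ⊗ e + [[0,0],[m,0]] ⊗ y' ⊗ e`, and it
commutes with both `B`-actions.

Since `(y, 0) = (1 - ε)·(y, 0)` and `(0, m ⊗ y) = [[0,0],[m,0]]·(y, 0)`, a bimodule map
`G(Y) → G(Z)` sends `Y × 0` into `Z × 0` and is determined by what it does there; this is full
faithfulness.

For projectivity, a section `σ : Y → (S ⊗ Sᵒᵖ)^(Y)` of the canonical surjection yields, through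
`s ⊗ t ↦ ι(s) ⊗ ι(t)` and `u ⊗ y ⊗ v ↦ (u ⊗ v)·σ(y)`, a section of
`(B ⊗ Bᵒᵖ)^(Y) → G(Y)`, `(y ↦ r) ↦ r·(y, 0)`.
-/

namespace NC

universe w v

section

variable {k : Type w} [CommRing k] {B : Type u} [Ring B]
variable {M N : Type v} [AddCommGroup M] [AddCommGroup N] [Module k M] [Module k N]
variable [Module Bᵐᵒᵖ M] [Module B N]

variable (k B M N) in
def mkₗ : M →ₗ[k] N →ₗ[k] Tensor k B M N :=
  (TensorProduct.mk k M N).compr₂ (rel k B M N).mkQ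

end

section

variable {k : Type w} [CommRing k] {B C : Type u} [Ring B] [Ring C]
variable {L Y R : Type v} [AddCommGroup L] [AddCommGroup Y] [AddCommGroup R]
variable [Module k L] [Module k Y] [Module k R] [Module Bᵐᵒᵖ L] [Module B Y] [Module C R]
variable [Module Cᵐᵒᵖ Y] [SMulCommClass Cᵐᵒᵖ B Y] [SMulCommClass Cᵐᵒᵖ k Y]

lemma induction_on₂ {p : Tensor k C (Tensor k B L Y) R → Prop}
    (t : Tensor k C (Tensor k B L Y) R) (zero : p 0) (add : ∀ x y, p x → p y → p (x + y))
    (basic : ∀ l y r, p (mk k C (mk k B l y) r)) : p t := by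
  induction t using induction_on with
  | zero => exact zero
  | add x y hx hy => exact add x y hx hy
  | basic X r =>
    induction X using induction_on with
    | zero => simpa only [mk_zero_left] using zero
    | add X X' hX hX' => simpa only [mk_add_left] using add _ _ hX hX'
    | basic l y => exact basic l y r

end

end NC

section TensorAlgebraModule

variable (k B C P : Type*) [CommRing k] [Ring B] [Ring C] [Algebra k B] [Algebra k C]

variable [AddCommGroup P] [Module (B ⊗[k] C) P] [Module B P] [Module C P] in
abbrev IsTmulSMul : Prop := ∀ (b : B) (c : C) (p : P), (b ⊗ₜ[k] c) • p = b • c • p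

variable {k B C P} {Q : Type*}
variable [AddCommGroup P] [Module (B ⊗[k] C) P] [AddCommGroup Q] [Module (B ⊗[k] C) Q]

def AddMonoidHom.toTensorLinearMap (f : P →+ Q)
    (hB : ∀ (b : B) (p : P), f ((b ⊗ₜ[k] (1 : C)) • p) = (b ⊗ₜ[k] (1 : C)) • f p)
    (hC : ∀ (c : C) (p : P), f (((1 : B) ⊗ₜ[k] c) • p) = ((1 : B) ⊗ₜ[k] c) • f p) :
    P →ₗ[B ⊗[k] C] Q where
  toFun := f
  map_add' := f.map_add
  map_smul' r p := by
    rw [RingHom.id_apply]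
    induction r using TensorProduct.induction_on with
    | zero => rw [zero_smul, zero_smul, map_zero]
    | add r r' hr hr' => rw [add_smul, map_add, hr, hr', add_smul]
    | tmul b c =>
      rw [← mul_one b, ← one_mul c, ← Algebra.TensorProduct.tmul_mul_tmul, mul_smul, mul_smul,
        hB, hC]

lemma IsTmulSMul.isScalarTower [Module k P] [Module B P] [Module C P] [IsScalarTower k B P]
    (h : IsTmulSMul k B C P) : IsScalarTower k (B ⊗[k] C) P :=
  IsScalarTower.of_algebraMap_smul fun c p => by
    rw [Algebra.TensorProduct.algebraMap_apply, h, one_smul, algebraMap_smul]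

end TensorAlgebraModule

section Corner

def iotaM {S M A : Type u} [Zero S] [Zero A] (m : M) : Tri S M A := ⟨0, m, 0⟩

section

variable {S M A : Type u} [Zero S] [Zero A]

@[simp] lemma iotaM_s (m : M) : (iotaM m : Tri S M A).s = 0 := rfl
@[simp] lemma iotaM_m (m : M) : (iotaM m : Tri S M A).m = m := rfl
@[simp] lemma iotaM_a (m : M) : (iotaM m : Tri S M A).a = 0 := rfl

end

variable (k : Type u) [Field k]
variable {S : Type u} [Ring S] [Algebra k S] {A : Type u} [Ring A] [Algebra k A]
variable {M : Type u} [AddCommGroup M] [Module k M] [Module A M] [Module Sᵐᵒᵖ M]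
variable [SMulCommClass A Sᵐᵒᵖ M] [IsScalarTower k A M] [IsScalarTower k Sᵐᵒᵖ M]

local notation "Bᵉ" => Tri S M A ⊗[k] (Tri S M A)ᵐᵒᵖ
local notation "Sᵉ" => S ⊗[k] Sᵐᵒᵖ

variable (S A M) in
def oneEpsLeftGen : oneEpsLeft S A M := ⟨iotaS S A M 1, iotaS_mul_oneEps S A M 1⟩

variable (S A M) in
def oneEpsRightGen : oneEpsRight S A M := ⟨iotaS S A M 1, oneEps_mul_iotaS S A M 1⟩

@[simp] lemma coe_oneEpsLeftGen : (oneEpsLeftGen S A M : Tri S M A) = iotaS S A M 1 := rfl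

@[simp] lemma coe_oneEpsRightGen : (oneEpsRightGen S A M : Tri S M A) = iotaS S A M 1 := rfl

@[simp] lemma oneEpsLeft_coe_op_smul (s : S) (u : oneEpsLeft S A M) :
    ((op s • u : oneEpsLeft S A M) : Tri S M A) = u * iotaS S A M s := rfl

variable (S A) in
def iotaMLeft : M →ₗ[k] oneEpsLeft S A M where
  toFun m := ⟨iotaM m, by ext <;> simp⟩
  map_add' m m' := by ext <;> simp
  map_smul' c m := by ext <;> simp

@[simp] lemma coe_iotaMLeft (m : M) : (iotaMLeft k S A m : Tri S M A) = iotaM m := rfl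

lemma iotaMLeft_smul_op (s : S) (m : M) :
    iotaMLeft k S A (op s • m) = op s • iotaMLeft k S A m := by
  ext <;> simp

lemma oneEpsLeft_mul_iotaS_one (u : oneEpsLeft S A M) :
    (u : Tri S M A) * iotaS S A M 1 = u := by
  rw [iotaS_one]
  exact u.2

lemma iotaS_one_mul_oneEpsRight (v : oneEpsRight S A M) :
    iotaS S A M 1 * (v : Tri S M A) = v := by
  rw [iotaS_one]
  exact v.2

lemma oneEpsLeft_eq (u : oneEpsLeft S A M) :
    u = op (u : Tri S M A).s • oneEpsLeftGen S A M + iotaMLeft k S A (u : Tri S M A).m := by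
  have hu : (u : Tri S M A) * (1 - Tri.eps : Tri S M A) = u := u.2
  ext
  · simp
  · simp
  · simpa using (congrArg Tri.a hu).symm

lemma oneEpsRight_eq (v : oneEpsRight S A M) :
    v = (v : Tri S M A).s • oneEpsRightGen S A M := by
  have hv : (1 - Tri.eps : Tri S M A) * v = v := v.2
  ext
  · simp [oneEpsRight_smul_def]
  · simpa [oneEpsRight_smul_def] using (congrArg Tri.m hv).symm
  · simpa [oneEpsRight_smul_def] using (congrArg Tri.a hv).symm

variable (S A M) in
def iotaSₗ : S →ₗ[k] Tri S M A where
  toFun := iotaS S A M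
  map_add' := iotaS_add S A M
  map_smul' := iotaS_smul k S A M

variable (S A M) in
def envIota : Sᵉ →ₗ[k] Bᵉ :=
  TensorProduct.map (iotaSₗ k S A M)
    ((opLinearEquiv k).toLinearMap ∘ₗ iotaSₗ k S A M ∘ₗ (opLinearEquiv k).symm.toLinearMap)

lemma envIota_tmul (s : S) (t : Sᵐᵒᵖ) :
    envIota k S A M (s ⊗ₜ t) = iotaS S A M s ⊗ₜ op (iotaS S A M t.unop) := rfl

lemma envIota_mul (x y : Sᵉ) : envIota k S A M (x * y) = envIota k S A M x * envIota k S A M y := by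
  induction x using TensorProduct.induction_on with
  | zero => simp
  | add x x' hx hx' => rw [add_mul, map_add, map_add, hx, hx', add_mul]
  | tmul s t =>
    induction y using TensorProduct.induction_on with
    | zero => simp
    | add y y' hy hy' => rw [mul_add, map_add, map_add, hy, hy', mul_add]
    | tmul s' t' =>
      rw [Algebra.TensorProduct.tmul_mul_tmul, envIota_tmul, envIota_tmul, envIota_tmul,
        Algebra.TensorProduct.tmul_mul_tmul, iotaS_mul, unop_mul, iotaS_mul, op_mul]

variable (S A M) in
def envPair : oneEpsLeft S A M →ₗ[k] oneEpsRight S A M →ₗ[k] Bᵉ :=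
  (TensorProduct.mk k _ _).compl₁₂ ((oneEpsLeft S A M).subtype.restrictScalars k)
    ((opLinearEquiv k).toLinearMap ∘ₗ (oneEpsRight S A M).subtype.restrictScalars k)

variable (ι : Type*)

variable (S A M) in
def liftFinsupp : (ι →₀ Sᵉ) →ₗ[k] (ι →₀ Bᵉ) := Finsupp.mapRange.linearMap (envIota k S A M)

lemma liftFinsupp_apply (F : ι →₀ Sᵉ) (i : ι) :
    liftFinsupp k S A M ι F i = envIota k S A M (F i) := rfl

lemma liftFinsupp_single (i : ι) (r : Sᵉ) :
    liftFinsupp k S A M ι (Finsupp.single i r) = Finsupp.single i (envIota k S A M r) :=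
  Finsupp.mapRange_single (hf := map_zero _)

lemma smul_liftFinsupp_smul (x : Bᵉ) (r : Sᵉ) (F : ι →₀ Sᵉ) :
    x • liftFinsupp k S A M ι (r • F) = (x * envIota k S A M r) • liftFinsupp k S A M ι F := by
  ext i
  simp [liftFinsupp_apply, envIota_mul, mul_assoc]

end Corner

section LeftAction

variable (k : Type u) [Field k]
variable {S : Type u} [Ring S] {A : Type u} [Ring A] [Algebra k A]
variable {M : Type u} [AddCommGroup M] [Module k M] [Module A M] [Module Sᵐᵒᵖ M]
variable [SMulCommClass A Sᵐᵒᵖ M] [IsScalarTower k A M]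
variable {Y : Type u} [AddCommGroup Y] [Module k Y] [Module S Y]

lemma smul_inl (b : Tri S M A) (y : Y) :
    b • ((y, 0) : GObj k S M Y) = (b.s • y, NC.mk k S b.m y) := by
  change (b.s • y, NC.mk k S b.m y + b.a • (0 : NC.Tensor k S M Y)) = _
  rw [smul_zero, add_zero]

lemma iotaS_smul_inl (s : S) (y : Y) :
    iotaS S A M s • ((y, 0) : GObj k S M Y) = (s • y, 0) := by
  rw [smul_inl, iotaS_s, iotaS_m, NC.mk_zero_left]

lemma iotaM_smul_inl (m : M) (y : Y) :
    (iotaM m : Tri S M A) • ((y, 0) : GObj k S M Y) = (0, NC.mk k S m y) := by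
  rw [smul_inl, iotaM_s, iotaM_m, zero_smul]

lemma oneSubEps_smul (p : GObj k S M Y) : (1 - Tri.eps : Tri S M A) • p = (p.1, 0) := by
  change ((1 - Tri.eps : Tri S M A).s • p.1,
    NC.mk k S (1 - Tri.eps : Tri S M A).m p.1 + (1 - Tri.eps : Tri S M A).a • p.2) = _
  simp [NC.mk_zero_left]

variable {Z : Type u} [AddCommGroup Z] [Module k Z] [Module S Z]
variable {g : GObj k S M Y →+ GObj k S M Z}

lemma map_inl_eq (hg : ∀ (b : Tri S M A) (p : GObj k S M Y), g (b • p) = b • g p) (y : Y) :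
    g (y, 0) = ((g (y, 0)).1, 0) := by
  rw [← oneSubEps_smul k (A := A) (y, (0 : NC.Tensor k S M Y)), hg, oneSubEps_smul]

lemma fst_map_inl_smul (hg : ∀ (b : Tri S M A) (p : GObj k S M Y), g (b • p) = b • g p)
    (s : S) (y : Y) : (g (s • y, 0)).1 = s • (g (y, 0)).1 := by
  rw [← iotaS_smul_inl k (A := A), hg, map_inl_eq k hg, iotaS_smul_inl]

lemma map_inr_eq (hg : ∀ (b : Tri S M A) (p : GObj k S M Y), g (b • p) = b • g p)
    (m : M) (y : Y) : g (0, NC.mk k S m y) = (0, NC.mk k S m (g (y, 0)).1) := by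
  rw [← iotaM_smul_inl k (A := A), hg, map_inl_eq k hg, iotaM_smul_inl]

end LeftAction

section Bimodule

variable (k : Type u) [Field k]
variable {S : Type u} [Ring S] [Algebra k S] {A : Type u} [Ring A] [Algebra k A]
variable {M : Type u} [AddCommGroup M] [Module k M] [Module A M] [Module Sᵐᵒᵖ M]
variable [SMulCommClass A Sᵐᵒᵖ M] [IsScalarTower k A M] [IsScalarTower k Sᵐᵒᵖ M]
variable {Y : Type u} [AddCommGroup Y] [Module k Y] [Module S Y] [Module Sᵐᵒᵖ Y]
variable [SMulCommClass Sᵐᵒᵖ S Y] [IsScalarTower k Sᵐᵒᵖ Y]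

local notation "T" Y => NC.Tensor k S (NC.Tensor k S (oneEpsLeft S A M) Y) (oneEpsRight S A M)

lemma gObj_op_smul_def (c : (Tri S M A)ᵐᵒᵖ) (p : GObj k S M Y) :
    c • p = (op c.unop.s • p.1, op c.unop.s • p.2) := rfl

variable (A M Y) in
def etaInvSnd : NC.Tensor k S M Y →ₗ[k] T Y :=
  NC.lift k S (((NC.mkₗ k S _ _).comp (iotaMLeft k S A)).compr₂
      ((NC.mkₗ k S _ _).flip (oneEpsRightGen S A M)))
    (fun s m y => by
      change NC.mk k S (NC.mk k S (iotaMLeft k S A (op s • m)) y) _ = NC.mk k S (NC.mk k S _ _) _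
      rw [iotaMLeft_smul_op, NC.mk_balanced])

variable (A M Y) in
def etaInv : GObj k S M Y →ₗ[k] T Y :=
  LinearMap.coprod
    ((NC.mkₗ k S _ _).flip (oneEpsRightGen S A M) ∘ₗ NC.mkₗ k S _ _ (oneEpsLeftGen S A M))
    (etaInvSnd k A M Y)

lemma etaInv_apply (y : Y) (t : NC.Tensor k S M Y) :
    etaInv k A M Y (y, t) = NC.mk k S (NC.mk k S (oneEpsLeftGen S A M) y) (oneEpsRightGen S A M)
      + etaInvSnd k A M Y t := rfl

lemma mk_mk_eq_etaInv (u : oneEpsLeft S A M) (y : Y) (v : oneEpsRight S A M) :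
    NC.mk k S (NC.mk k S u y) v
      = etaInv k A M Y (op (v : Tri S M A).s • (u : Tri S M A).s • y,
          NC.mk k S (u : Tri S M A).m (op (v : Tri S M A).s • y)) := calc
  _ = NC.mk k S (NC.mk k S u (op (v : Tri S M A).s • y)) (oneEpsRightGen S A M) := by
    conv_lhs => rw [oneEpsRight_eq v]
    rw [← NC.mk_balanced, NC.smul_mk_right]
  _ = _ := by
    conv_lhs => rw [oneEpsLeft_eq k u]
    rw [NC.mk_add_left, NC.mk_add_left, NC.mk_balanced, ← smul_comm]
    rfl

lemma fst_map_inl_op_smul {Z : Type u} [AddCommGroup Z] [Module k Z] [Module S Z]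
    [Module Sᵐᵒᵖ Z] [SMulCommClass Sᵐᵒᵖ S Z] [IsScalarTower k Sᵐᵒᵖ Z]
    {g : GObj k S M Y →+ GObj k S M Z}
    (hg : ∀ (c : (Tri S M A)ᵐᵒᵖ) (p : GObj k S M Y), g (c • p) = c • g p)
    (s : Sᵐᵒᵖ) (y : Y) :
    (g (s • y, 0)).1 = s • (g (y, 0)).1 := by
  have h := congrArg Prod.fst (hg (op (iotaS S A M s.unop)) (y, 0))
  simpa [gObj_op_smul_def] using h

end Bimodule

section Eta

variable (k : Type u) [Field k]
variable {S : Type u} [Ring S] [Algebra k S] [FiniteDimensional k S]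
variable {A : Type u} [Ring A] [Algebra k A] [FiniteDimensional k A]
variable {M : Type u} [AddCommGroup M] [Module k M] [Module A M] [Module Sᵐᵒᵖ M]
variable [SMulCommClass A Sᵐᵒᵖ M] [IsScalarTower k A M] [IsScalarTower k Sᵐᵒᵖ M]
variable [FiniteDimensional k M]
variable {Y : Type u} [AddCommGroup Y] [Module k Y] [Module S Y] [Module Sᵐᵒᵖ Y]
variable [SMulCommClass S Sᵐᵒᵖ Y] [SMulCommClass Sᵐᵒᵖ S Y] [IsScalarTower k S Y]
variable [IsScalarTower k Sᵐᵒᵖ Y]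

local notation "T" Y => NC.Tensor k S (NC.Tensor k S (oneEpsLeft S A M) Y) (oneEpsRight S A M)

variable (A M Y) in
def etaLeft : NC.Tensor k S (oneEpsLeft S A M) Y →ₗ[k] GObj k S M Y :=
  NC.lift k S ((Algebra.lsmul k k (GObj k S M Y)).toLinearMap.compl₁₂
      ((oneEpsLeft S A M).subtype.restrictScalars k) (LinearMap.inl k Y _))
    (fun s u y => by
      change ((op s • u : oneEpsLeft S A M) : Tri S M A) • ((y, 0) : GObj k S M Y)
        = (u : Tri S M A) • ((s • y, 0) : GObj k S M Y)
      rw [oneEpsLeft_coe_op_smul, mul_smul, iotaS_smul_inl])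

lemma etaLeft_mk (u : oneEpsLeft S A M) (y : Y) :
    etaLeft k A M Y (NC.mk k S u y) = (u : Tri S M A) • ((y, 0) : GObj k S M Y) := rfl

lemma etaLeft_op_smul (s : S) (X : NC.Tensor k S (oneEpsLeft S A M) Y) :
    etaLeft k A M Y (op s • X) = op (iotaS S A M s) • etaLeft k A M Y X := by
  induction X using NC.induction_on with
  | zero => simp
  | add X X' hX hX' => rw [smul_add, map_add, map_add, hX, hX', smul_add]
  | basic u y =>
    rw [NC.smul_mk_right, etaLeft_mk, etaLeft_mk, ← smul_comm]
    rfl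

variable (A M Y) in
def eta : (T Y) →ₗ[k] GObj k S M Y :=
  NC.lift k S ((Algebra.lsmul k k (GObj k S M Y)).toLinearMap.compl₁₂
      ((opLinearEquiv k).toLinearMap ∘ₗ (oneEpsRight S A M).subtype.restrictScalars k)
      (etaLeft k A M Y)).flip
    (fun s X v => by
      change op (v : Tri S M A) • etaLeft k A M Y (op s • X)
        = op ((s • v : oneEpsRight S A M) : Tri S M A) • etaLeft k A M Y X
      rw [etaLeft_op_smul, oneEpsRight_smul_def, op_mul, mul_smul])

lemma eta_mk_mk (u : oneEpsLeft S A M) (y : Y) (v : oneEpsRight S A M) :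
    eta k A M Y (NC.mk k S (NC.mk k S u y) v)
      = op (v : Tri S M A) • (u : Tri S M A) • ((y, 0) : GObj k S M Y) := rfl

lemma eta_etaInv (p : GObj k S M Y) : eta k A M Y (etaInv k A M Y p) = p := by
  obtain ⟨y, t⟩ := p
  have hSnd : eta k A M Y (etaInvSnd k A M Y t) = (0, t) := by
    induction t using NC.induction_on with
    | zero => rw [map_zero, map_zero, Prod.zero_eq_mk]
    | add t t' ht ht' => rw [map_add, map_add, ht, ht', Prod.mk_add_mk, add_zero]
    | basic m y =>
      change eta k A M Y (NC.mk k S (NC.mk k S (iotaMLeft k S A m) y) _) = _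
      rw [eta_mk_mk, coe_iotaMLeft, iotaM_smul_inl, gObj_op_smul_def]
      simp
  rw [etaInv_apply, map_add, hSnd, eta_mk_mk, coe_oneEpsLeftGen, iotaS_smul_inl,
    gObj_op_smul_def]
  simp

lemma etaInv_eta (t : T Y) : etaInv k A M Y (eta k A M Y t) = t := by
  induction t using NC.induction_on₂ with
  | zero => simp
  | add t t' ht ht' => rw [map_add, map_add, ht, ht']
  | basic u y v =>
    rw [eta_mk_mk, smul_inl, gObj_op_smul_def, unop_op, NC.smul_mk_right, mk_mk_eq_etaInv k u y v]

variable (A M Y) in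
def etaEquiv : (T Y) ≃ₗ[k] GObj k S M Y :=
  LinearEquiv.ofLinearMap (eta k A M Y) (etaInv k A M Y) (LinearMap.ext (eta_etaInv k))
    (LinearMap.ext (etaInv_eta k))

lemma eta_smul (b : Tri S M A) (t : T Y) :
    eta k A M Y (b • t) = b • eta k A M Y t := by
  induction t using NC.induction_on₂ with
  | zero => simp
  | add t t' ht ht' => rw [smul_add, map_add, map_add, ht, ht', smul_add]
  | basic u y v =>
    change eta k A M Y (NC.mk k S (NC.mk k S (b • u) y) v) = _
    rw [eta_mk_mk, eta_mk_mk, Submodule.coe_smul, smul_eq_mul, mul_smul, smul_comm]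

lemma eta_op_smul (c : (Tri S M A)ᵐᵒᵖ) (t : T Y) :
    eta k A M Y (c • t) = c • eta k A M Y t := by
  induction t using NC.induction_on₂ with
  | zero => simp
  | add t t' ht ht' => rw [smul_add, map_add, map_add, ht, ht', smul_add]
  | basic u y v =>
    rw [NC.smul_mk_right, eta_mk_mk, eta_mk_mk, Submodule.coe_smul, MulOpposite.smul_eq_mul_unop,
      op_mul, op_unop, mul_smul]

lemma etaInv_smul (b : Tri S M A) (p : GObj k S M Y) :
    etaInv k A M Y (b • p) = b • etaInv k A M Y p := by
  conv_lhs => rw [← eta_etaInv k (A := A) p, ← eta_smul, etaInv_eta]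

lemma etaInv_op_smul (c : (Tri S M A)ᵐᵒᵖ) (p : GObj k S M Y) :
    etaInv k A M Y (c • p) = c • etaInv k A M Y p := by
  conv_lhs => rw [← eta_etaInv k (A := A) p, ← eta_op_smul, etaInv_eta]

lemma eta_mk_mk_map {Z : Type u} [AddCommGroup Z] [Module k Z] [Module S Z] [Module Sᵐᵒᵖ Z]
    [SMulCommClass S Sᵐᵒᵖ Z] [SMulCommClass Sᵐᵒᵖ S Z] [IsScalarTower k S Z]
    [IsScalarTower k Sᵐᵒᵖ Z] {g : GObj k S M Y →+ GObj k S M Z}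
    (hg : ∀ (b : Tri S M A) (p : GObj k S M Y), g (b • p) = b • g p)
    (hg' : ∀ (c : (Tri S M A)ᵐᵒᵖ) (p : GObj k S M Y), g (c • p) = c • g p)
    {y : Y} {z : Z} (hyz : g (y, 0) = (z, 0)) (u : oneEpsLeft S A M) (v : oneEpsRight S A M) :
    eta k A M Z (NC.mk k S (NC.mk k S u z) v) = g (eta k A M Y (NC.mk k S (NC.mk k S u y) v)) := by
  rw [eta_mk_mk, eta_mk_mk, hg', hg, hyz]

end Eta

section Splitting

variable (k : Type u) [Field k]
variable {S : Type u} [Ring S] [Algebra k S] {A : Type u} [Ring A] [Algebra k A]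
variable {M : Type u} [AddCommGroup M] [Module k M] [Module A M] [Module Sᵐᵒᵖ M]
variable [SMulCommClass A Sᵐᵒᵖ M] [IsScalarTower k A M] [IsScalarTower k Sᵐᵒᵖ M]
variable {Y : Type u} [AddCommGroup Y] [Module k Y]
variable [Module (S ⊗[k] Sᵐᵒᵖ) Y] [IsScalarTower k (S ⊗[k] Sᵐᵒᵖ) Y]

local notation "Bᵉ" => Tri S M A ⊗[k] (Tri S M A)ᵐᵒᵖ
local notation "Sᵉ" => S ⊗[k] Sᵐᵒᵖ

variable (A M) in
def splittingForm (σ : Y →ₗ[Sᵉ] (Y →₀ Sᵉ)) :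
    oneEpsLeft S A M →ₗ[k] Y →ₗ[k] oneEpsRight S A M →ₗ[k] (Y →₀ Bᵉ) :=
  (LinearMap.lflip : (oneEpsRight S A M →ₗ[k] Y →ₗ[k] (Y →₀ Bᵉ)) ≃ₗ[k]
      (Y →ₗ[k] oneEpsRight S A M →ₗ[k] (Y →₀ Bᵉ))).toLinearMap ∘ₗ
    (envPair k S A M).compr₂ ((Algebra.lsmul k k (A := Bᵉ) (Y →₀ Bᵉ)).toLinearMap.compl₂
      (liftFinsupp k S A M Y ∘ₗ σ.restrictScalars k))

lemma splittingForm_apply (σ : Y →ₗ[Sᵉ] (Y →₀ Sᵉ)) (u : oneEpsLeft S A M) (y : Y)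
    (v : oneEpsRight S A M) :
    splittingForm k A M σ u y v
      = (u : Tri S M A) ⊗ₜ[k] op (v : Tri S M A) • liftFinsupp k S A M Y (σ y) := rfl

variable [Module S Y] [Module Sᵐᵒᵖ Y]

variable (A M) in
def splittingLeft (hSY : IsTmulSMul k S Sᵐᵒᵖ Y) (σ : Y →ₗ[Sᵉ] (Y →₀ Sᵉ)) :
    NC.Tensor k S (oneEpsLeft S A M) Y →ₗ[k] oneEpsRight S A M →ₗ[k] (Y →₀ Bᵉ) :=
  NC.lift k S (P := oneEpsRight S A M →ₗ[k] (Y →₀ Bᵉ)) (splittingForm k A M σ)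
    (fun s u y => by
      refine LinearMap.ext fun v => ?_
      have hs : s • y = (s ⊗ₜ[k] (1 : Sᵐᵒᵖ)) • y := by rw [hSY, one_smul]
      rw [splittingForm_apply, splittingForm_apply, hs, map_smul, smul_liftFinsupp_smul,
        envIota_tmul, Algebra.TensorProduct.tmul_mul_tmul, ← op_mul, unop_one,
        iotaS_one_mul_oneEpsRight, oneEpsLeft_coe_op_smul])

lemma splittingLeft_mk (hSY : IsTmulSMul k S Sᵐᵒᵖ Y) (σ : Y →ₗ[Sᵉ] (Y →₀ Sᵉ))
    (u : oneEpsLeft S A M) (y : Y) (v : oneEpsRight S A M) :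
    splittingLeft k A M hSY σ (NC.mk k S u y) v
      = (u : Tri S M A) ⊗ₜ[k] op (v : Tri S M A) • liftFinsupp k S A M Y (σ y) := rfl

variable [SMulCommClass Sᵐᵒᵖ S Y] [IsScalarTower k Sᵐᵒᵖ Y]

local notation "T" Y => NC.Tensor k S (NC.Tensor k S (oneEpsLeft S A M) Y) (oneEpsRight S A M)

variable (A M) in
def splitting (hSY : IsTmulSMul k S Sᵐᵒᵖ Y) (σ : Y →ₗ[Sᵉ] (Y →₀ Sᵉ)) :
    (T Y) →ₗ[k] (Y →₀ Bᵉ) :=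
  NC.lift k S (splittingLeft k A M hSY σ) (fun s X v => by
    induction X using NC.induction_on with
    | zero => simp
    | add X X' hX hX' =>
      rw [smul_add, map_add, map_add, LinearMap.add_apply, LinearMap.add_apply, hX, hX']
    | basic u y =>
      have hs : op s • y = ((1 : S) ⊗ₜ[k] op s) • y := by rw [hSY, one_smul]
      rw [NC.smul_mk_right, splittingLeft_mk, splittingLeft_mk, hs, map_smul,
        smul_liftFinsupp_smul, envIota_tmul, Algebra.TensorProduct.tmul_mul_tmul, ← op_mul,
        unop_op, oneEpsLeft_mul_iotaS_one, oneEpsRight_smul_def])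

lemma splitting_mk_mk (hSY : IsTmulSMul k S Sᵐᵒᵖ Y) (σ : Y →ₗ[Sᵉ] (Y →₀ Sᵉ))
    (u : oneEpsLeft S A M) (y : Y) (v : oneEpsRight S A M) :
    splitting k A M hSY σ (NC.mk k S (NC.mk k S u y) v)
      = (u : Tri S M A) ⊗ₜ[k] op (v : Tri S M A) • liftFinsupp k S A M Y (σ y) := rfl

lemma splitting_smul (hSY : IsTmulSMul k S Sᵐᵒᵖ Y) (σ : Y →ₗ[Sᵉ] (Y →₀ Sᵉ)) (b : Tri S M A)
    (t : T Y) :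
    splitting k A M hSY σ (b • t)
      = (b ⊗ₜ[k] (1 : (Tri S M A)ᵐᵒᵖ)) • splitting k A M hSY σ t := by
  induction t using NC.induction_on₂ with
  | zero => simp
  | add t t' ht ht' => rw [smul_add, map_add, map_add, ht, ht', smul_add]
  | basic u y v =>
    change splitting k A M hSY σ (NC.mk k S (NC.mk k S (b • u) y) v) = _
    ext i
    simp [splitting_mk_mk, ← mul_assoc]

lemma splitting_op_smul (hSY : IsTmulSMul k S Sᵐᵒᵖ Y) (σ : Y →ₗ[Sᵉ] (Y →₀ Sᵉ))
    (c : (Tri S M A)ᵐᵒᵖ) (t : T Y) :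
    splitting k A M hSY σ (c • t) = ((1 : Tri S M A) ⊗ₜ[k] c) • splitting k A M hSY σ t := by
  induction t using NC.induction_on₂ with
  | zero => simp
  | add t t' ht ht' => rw [smul_add, map_add, map_add, ht, ht', smul_add]
  | basic u y v =>
    rw [NC.smul_mk_right]
    ext i
    simp [splitting_mk_mk, ← mul_assoc, MulOpposite.smul_eq_mul_unop]

end Splitting

section EnvelopingAction

variable (k : Type u) [Field k]
variable {S : Type u} [Ring S] [Algebra k S] {A : Type u} [Ring A] [Algebra k A]
variable {M : Type u} [AddCommGroup M] [Module k M] [Module A M] [Module Sᵐᵒᵖ M]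
variable [SMulCommClass A Sᵐᵒᵖ M] [IsScalarTower k A M] [IsScalarTower k Sᵐᵒᵖ M]
variable {Y : Type u} [AddCommGroup Y] [Module k Y] [Module S Y] [Module Sᵐᵒᵖ Y]
variable [SMulCommClass Sᵐᵒᵖ S Y] [IsScalarTower k Sᵐᵒᵖ Y]
variable [Module (S ⊗[k] Sᵐᵒᵖ) Y] [Module (Tri S M A ⊗[k] (Tri S M A)ᵐᵒᵖ) (GObj k S M Y)]

local notation "Bᵉ" => Tri S M A ⊗[k] (Tri S M A)ᵐᵒᵖ
local notation "Sᵉ" => S ⊗[k] Sᵐᵒᵖ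

lemma envIota_smul_inl (hSY : IsTmulSMul k S Sᵐᵒᵖ Y)
    (hG : IsTmulSMul k (Tri S M A) (Tri S M A)ᵐᵒᵖ (GObj k S M Y)) (r : Sᵉ) (y : Y) :
    envIota k S A M r • ((y, 0) : GObj k S M Y) = (r • y, 0) := by
  induction r using TensorProduct.induction_on with
  | zero =>
    rw [map_zero]
    exact (zero_smul Bᵉ ((y, 0) : GObj k S M Y)).trans
      (congrArg (·, (0 : NC.Tensor k S M Y)) (zero_smul Sᵉ y).symm)
  | add r r' hr hr' => rw [map_add, add_smul, hr, hr', add_smul, Prod.mk_add_mk, add_zero]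
  | tmul s t =>
    rw [envIota_tmul, hG, gObj_op_smul_def, hSY]
    simp [iotaS_smul_inl]

lemma linearCombination_liftFinsupp (hSY : IsTmulSMul k S Sᵐᵒᵖ Y)
    (hG : IsTmulSMul k (Tri S M A) (Tri S M A)ᵐᵒᵖ (GObj k S M Y)) (F : Y →₀ Sᵉ) :
    Finsupp.linearCombination Bᵉ (fun y => ((y, 0) : GObj k S M Y)) (liftFinsupp k S A M Y F)
      = (Finsupp.linearCombination Sᵉ id F, 0) := by
  induction F using Finsupp.induction_linear with
  | zero => simp; rfl
  | add F F' hF hF' => rw [map_add, map_add, hF, hF', map_add, Prod.mk_add_mk, add_zero]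
  | single y r =>
    rw [liftFinsupp_single, Finsupp.linearCombination_single, Finsupp.linearCombination_single,
      envIota_smul_inl k hSY hG]
    rfl

end EnvelopingAction

section Projective

variable (k : Type u) [Field k]
variable {S : Type u} [Ring S] [Algebra k S] [FiniteDimensional k S]
variable {A : Type u} [Ring A] [Algebra k A] [FiniteDimensional k A]
variable {M : Type u} [AddCommGroup M] [Module k M] [Module A M] [Module Sᵐᵒᵖ M]
variable [SMulCommClass A Sᵐᵒᵖ M] [IsScalarTower k A M] [IsScalarTower k Sᵐᵒᵖ M]
variable [FiniteDimensional k M]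
variable {Y : Type u} [AddCommGroup Y] [Module k Y] [Module S Y] [Module Sᵐᵒᵖ Y]
variable [SMulCommClass S Sᵐᵒᵖ Y] [SMulCommClass Sᵐᵒᵖ S Y] [IsScalarTower k S Y]
variable [IsScalarTower k Sᵐᵒᵖ Y]
variable [Module (S ⊗[k] Sᵐᵒᵖ) Y] [IsScalarTower k (S ⊗[k] Sᵐᵒᵖ) Y]
variable [Module (Tri S M A ⊗[k] (Tri S M A)ᵐᵒᵖ) (GObj k S M Y)]

local notation "T" Y => NC.Tensor k S (NC.Tensor k S (oneEpsLeft S A M) Y) (oneEpsRight S A M)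
local notation "Bᵉ" => Tri S M A ⊗[k] (Tri S M A)ᵐᵒᵖ
local notation "Sᵉ" => S ⊗[k] Sᵐᵒᵖ

lemma linearCombination_splitting (hSY : IsTmulSMul k S Sᵐᵒᵖ Y)
    (hG : IsTmulSMul k (Tri S M A) (Tri S M A)ᵐᵒᵖ (GObj k S M Y)) {σ : Y →ₗ[Sᵉ] (Y →₀ Sᵉ)}
    (hσ : Function.LeftInverse (Finsupp.linearCombination Sᵉ id) σ) (t : T Y) :
    Finsupp.linearCombination Bᵉ (fun y => ((y, 0) : GObj k S M Y)) (splitting k A M hSY σ t)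
      = eta k A M Y t := by
  induction t using NC.induction_on₂ with
  | zero => simp
  | add t t' ht ht' => rw [map_add, map_add, map_add, ht, ht']
  | basic u y v =>
    rw [splitting_mk_mk, map_smul, linearCombination_liftFinsupp k hSY hG, hσ y, hG, eta_mk_mk,
      smul_comm]

/-- The module structures over the enveloping algebras are taken as arbitrary ones satisfying
`(b ⊗ c) • p = b • c • p`: declaring `TensorProduct.Algebra.module` an instance here would also
act on `Y →₀ B ⊗ Bᵒᵖ` and clash with its `Finsupp` structure. -/
theorem gObj_projective (hSY : IsTmulSMul k S Sᵐᵒᵖ Y)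
    (hG : IsTmulSMul k (Tri S M A) (Tri S M A)ᵐᵒᵖ (GObj k S M Y)) [Module.Projective Sᵉ Y] :
    Module.Projective Bᵉ (GObj k S M Y) := by
  obtain ⟨σ, hσ⟩ := Module.projective_def.mp ‹Module.Projective Sᵉ Y›
  let split : GObj k S M Y →ₗ[Bᵉ] (Y →₀ Bᵉ) := AddMonoidHom.toTensorLinearMap
    ((splitting k A M hSY σ).toAddMonoidHom.comp (etaInv k A M Y).toAddMonoidHom)
    (fun b p => by simp [hG, etaInv_smul, splitting_smul])
    (fun c p => by simp [hG, etaInv_op_smul, splitting_op_smul])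
  refine .of_split split (Finsupp.linearCombination Bᵉ fun y => ((y, 0) : GObj k S M Y))
    (LinearMap.ext fun p => ?_)
  simp [split, AddMonoidHom.toTensorLinearMap, linearCombination_splitting k hSY hG hσ,
    eta_etaInv]

end Projective

section

variable (k : Type u) [Field k]
variable (S : Type u) [Ring S] [Algebra k S] [FiniteDimensional k S]
variable (A : Type u) [Ring A] [Algebra k A] [FiniteDimensional k A]
variable (M : Type u) [AddCommGroup M] [Module k M] [Module A M] [Module Sᵐᵒᵖ M]
variable [SMulCommClass A Sᵐᵒᵖ M] [IsScalarTower k A M] [IsScalarTower k Sᵐᵒᵖ M]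
variable [FiniteDimensional k M]

/-- The functor `G` from `(S ⊗ Sᵒᵖ)`-modules to `(B ⊗ Bᵒᵖ)`-modules
sending `Y` to `[[Y, 0],[M ⊗_S Y, 0]]` is naturally isomorphic to
`B(1−ε) ⊗_S (−) ⊗_S (1−ε)B`; it is fully faithful and sends projective objects to
projective objects. -/
theorem stmt8 :
    (∃ η : ∀ (Y : Type u) [AddCommGroup Y] [Module k Y] [Module S Y] [Module Sᵐᵒᵖ Y] [SMulCommClass S Sᵐᵒᵖ Y] [SMulCommClass Sᵐᵒᵖ S Y] [IsScalarTower k S Y] [IsScalarTower k Sᵐᵒᵖ Y],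
        NC.Tensor k S (NC.Tensor k S (oneEpsLeft S A M) Y) (oneEpsRight S A M) ≃+
          GObj k S M Y,
      (∀ (Y : Type u) [AddCommGroup Y] [Module k Y] [Module S Y] [Module Sᵐᵒᵖ Y] [SMulCommClass S Sᵐᵒᵖ Y] [SMulCommClass Sᵐᵒᵖ S Y] [IsScalarTower k S Y] [IsScalarTower k Sᵐᵒᵖ Y] (b : Tri S M A)
          (t : NC.Tensor k S (NC.Tensor k S (oneEpsLeft S A M) Y) (oneEpsRight S A M)),
        η Y (b • t) = b • η Y t) ∧
      (∀ (Y : Type u) [AddCommGroup Y] [Module k Y] [Module S Y] [Module Sᵐᵒᵖ Y] [SMulCommClass S Sᵐᵒᵖ Y] [SMulCommClass Sᵐᵒᵖ S Y] [IsScalarTower k S Y] [IsScalarTower k Sᵐᵒᵖ Y] (b : (Tri S M A)ᵐᵒᵖ)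
          (t : NC.Tensor k S (NC.Tensor k S (oneEpsLeft S A M) Y) (oneEpsRight S A M)),
        η Y (b • t) = b • η Y t) ∧
      (∀ (Y : Type u) [AddCommGroup Y] [Module k Y] [Module S Y] [Module Sᵐᵒᵖ Y] [SMulCommClass S Sᵐᵒᵖ Y] [SMulCommClass Sᵐᵒᵖ S Y] [IsScalarTower k S Y] [IsScalarTower k Sᵐᵒᵖ Y] (Z : Type u) [AddCommGroup Z] [Module k Z] [Module S Z] [Module Sᵐᵒᵖ Z] [SMulCommClass S Sᵐᵒᵖ Z] [SMulCommClass Sᵐᵒᵖ S Z] [IsScalarTower k S Z] [IsScalarTower k Sᵐᵒᵖ Z]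
          (f : Y →+ Z) (g : GObj k S M Y →+ GObj k S M Z),
        (∀ (s : S) (y : Y), f (s • y) = s • f y) →
        (∀ (s : Sᵐᵒᵖ) (y : Y), f (s • y) = s • f y) →
        (∀ (b : Tri S M A) (p : GObj k S M Y), g (b • p) = b • g p) →
        (∀ (b : (Tri S M A)ᵐᵒᵖ) (p : GObj k S M Y), g (b • p) = b • g p) →
        (∀ y : Y, g (y, 0) = (f y, 0)) →
        (∀ (m : M) (y : Y), g (0, NC.mk k S m y) = (0, NC.mk k S m (f y))) →
        ∀ (u : oneEpsLeft S A M) (y : Y) (v : oneEpsRight S A M),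
          η Z (NC.mk k S (NC.mk k S u (f y)) v)
            = g (η Y (NC.mk k S (NC.mk k S u y) v)))) ∧
    (∀ (Y : Type u) [AddCommGroup Y] [Module k Y] [Module S Y] [Module Sᵐᵒᵖ Y] [SMulCommClass S Sᵐᵒᵖ Y] [SMulCommClass Sᵐᵒᵖ S Y] [IsScalarTower k S Y] [IsScalarTower k Sᵐᵒᵖ Y] (Z : Type u) [AddCommGroup Z] [Module k Z] [Module S Z] [Module Sᵐᵒᵖ Z] [SMulCommClass S Sᵐᵒᵖ Z] [SMulCommClass Sᵐᵒᵖ S Z] [IsScalarTower k S Z] [IsScalarTower k Sᵐᵒᵖ Z]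
        (g : GObj k S M Y →+ GObj k S M Z),
      (∀ (b : Tri S M A) (p : GObj k S M Y), g (b • p) = b • g p) →
      (∀ (b : (Tri S M A)ᵐᵒᵖ) (p : GObj k S M Y), g (b • p) = b • g p) →
      ∃! f : Y →+ Z,
        (∀ (s : S) (y : Y), f (s • y) = s • f y) ∧
        (∀ (s : Sᵐᵒᵖ) (y : Y), f (s • y) = s • f y) ∧
        (∀ y : Y, g (y, 0) = (f y, 0)) ∧
        (∀ (m : M) (y : Y), g (0, NC.mk k S m y) = (0, NC.mk k S m (f y)))) ∧
    (∀ (Y : Type u) [AddCommGroup Y] [Module k Y] [Module S Y] [Module Sᵐᵒᵖ Y] [SMulCommClass S Sᵐᵒᵖ Y] [SMulCommClass Sᵐᵒᵖ S Y] [IsScalarTower k S Y] [IsScalarTower k Sᵐᵒᵖ Y],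
      @Module.Projective (S ⊗[k] Sᵐᵒᵖ) _ Y _ (envY k S Y) →
      @Module.Projective (Tri S M A ⊗[k] (Tri S M A)ᵐᵒᵖ) _ (GObj k S M Y) _
        (envGY k S A M Y)) := by
  refine ⟨⟨fun Y _ _ _ _ _ _ _ _ => (etaEquiv k A M Y).toAddEquiv,
    fun Y _ _ _ _ _ _ _ _ => eta_smul k, fun Y _ _ _ _ _ _ _ _ => eta_op_smul k, ?natural⟩,
    ?full, ?projective⟩
  case natural =>
    intro Y _ _ _ _ _ _ _ _ Z _ _ _ _ _ _ _ _ f g _ _ hg hg' hgf _ u y v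
    exact eta_mk_mk_map k hg hg' (hgf y) u v
  case full =>
    intro Y _ _ _ _ _ _ _ _ Z _ _ _ _ _ _ _ _ g hg hg'
    refine ⟨(AddMonoidHom.fst Z _).comp (g.comp (AddMonoidHom.inl Y _)),
      ⟨fst_map_inl_smul k hg, fst_map_inl_op_smul k hg', map_inl_eq k hg, map_inr_eq k hg⟩,
      fun f ⟨_, _, hgf, _⟩ => AddMonoidHom.ext fun y => (congrArg Prod.fst (hgf y)).symm⟩
  case projective =>
    intro Y _ _ _ _ _ _ _ _ hY
    let := envY k S Y
    let := envGY k S A M Y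
    have hSY : IsTmulSMul k S Sᵐᵒᵖ Y := fun _ _ _ => rfl
    have := hSY.isScalarTower
    exact gObj_projective k hSY (fun _ _ _ => rfl)

end
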